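/- arXiv:1309.4670 — 3 statements merged into one kernel-verified Lean document; each statement's English description precedes it below -/
import Mathlib

section
/- Let τ > 0 and let f₁, f₂ : ℝ → ℂ be integrable functions such that for every x ∈ ℝ, ∫_{ℝ} (1/(2√(πτ))) · exp(−(x−ξ)²/(4τ)) · f₁(ξ) dξ = ∫_{ℝ} (1/(2√(πτ))) · exp(−(x−ξ)²/(4τ)) · f₂(ξ) dξ. Then f₁ = f₂ almost everywhere. (Uniqueness part of Theorem 1 in the homogeneous case: the retrospective heat problem has at most one integrable solution.) -/
/-!
Convolution with the heat kernel `G_τ` becomes, on the Fourier side, multiplication by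
`𝓕 G_τ`, which is again a Gaussian and so vanishes nowhere. Hence `f₁` and `f₂` have the same
Fourier transform. The Fourier transform is injective on `L¹`: every test function is the
Fourier transform of a Schwartz function `Φ`, and `∫ 𝓕 Φ • f = ∫ Φ • 𝓕 f`, so `f₁` and `f₂`
have the same integral against every test function.
-/

open MeasureTheory Real

open scoped FourierTransform SchwartzMap Convolution

namespace Real

variable {V E : Type*} [NormedAddCommGroup V] [InnerProductSpace ℝ V] [FiniteDimensional ℝ V]
  [MeasurableSpace V] [BorelSpace V] [NormedAddCommGroup E] [NormedSpace ℂ E]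

theorem fourier_const_smul (c : ℂ) (f : V → E) : 𝓕 (c • f) = c • 𝓕 f :=
  VectorFourier.fourierIntegral_const_smul 𝐞 volume (innerₗ V) f c

variable [CompleteSpace E]

theorem integral_fourier_smul_eq_of_integrable {f : V → ℂ} {g : V → E}
    (hf : Integrable f) (hg : Integrable g) :
    ∫ ξ, 𝓕 f ξ • g ξ = ∫ x, f x • 𝓕 g x := by
  simpa using! VectorFourier.integral_fourierIntegral_smul_eq_flip (L := innerₗ V)
    continuous_fourierChar continuous_inner hf hg

theorem ae_eq_of_fourier_eq {f g : V → E} (hf : Integrable f) (hg : Integrable g)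
    (hfg : 𝓕 f = 𝓕 g) : f =ᵐ[volume] g := by
  refine ae_eq_of_integral_contDiff_smul_eq hf.locallyIntegrable hg.locallyIntegrable
    fun φ hφ hφc => ?_
  set Ψ : 𝓢(V, ℂ) := (hφc.comp_left Complex.ofReal_zero).toSchwartzMap
    (Complex.ofRealCLM.contDiff.comp hφ)
  have hΨ : ∀ h : V → E, Integrable h → ∫ x, φ x • h x = ∫ ξ, 𝓕⁻ Ψ ξ • 𝓕 h ξ := by
    intro h hh
    rw [← integral_fourier_smul_eq_of_integrable (𝓕⁻ Ψ).integrable hh, ← SchwartzMap.fourier_coe,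
      FourierTransform.fourier_fourierInv_eq]
    congr 1 with x
  rw [hΨ f hf, hΨ g hg, hfg]

theorem ae_eq_of_convolution_eq {K f₁ f₂ : V → ℂ} (hK : Integrable K) (hFK : ∀ ξ, 𝓕 K ξ ≠ 0)
    (hf₁ : Integrable f₁) (hf₂ : Integrable f₂)
    (h : f₁ ⋆[ContinuousLinearMap.mul ℂ ℂ] K = f₂ ⋆[ContinuousLinearMap.mul ℂ ℂ] K) :
    f₁ =ᵐ[volume] f₂ := by
  refine ae_eq_of_fourier_eq hf₁ hf₂ (funext fun ξ => mul_right_cancel₀ (hFK ξ) ?_)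
  rw [← fourier_mul_convolution_eq hf₁ hK, ← fourier_mul_convolution_eq hf₂ hK, h]

end Real

noncomputable def heatKernel (τ x : ℝ) : ℂ :=
  (1 / (2 * Real.sqrt (π * τ)) : ℂ) * Complex.exp (-(x : ℂ) ^ 2 / (4 * τ))

theorem convolution_heatKernel_apply (f : ℝ → ℂ) (τ x : ℝ) :
    (f ⋆[ContinuousLinearMap.mul ℂ ℂ] heatKernel τ) x =
      ∫ ξ : ℝ, (1 / (2 * Real.sqrt (π * τ)) : ℂ) *
          Complex.exp (-(((x : ℂ) - ξ) ^ 2) / (4 * τ)) * f ξ := by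
  simp only [convolution_def, ContinuousLinearMap.mul_apply', heatKernel]
  congr 1 with ξ
  push_cast
  ring

theorem heatKernel_eq_smul_gaussian (τ : ℝ) :
    heatKernel τ = (1 / (2 * Real.sqrt (π * τ)) : ℂ) •
      fun x : ℝ => Complex.exp (-π * ((1 / (4 * π * τ) : ℝ) : ℂ) * x ^ 2) := by
  ext x
  simp only [heatKernel, Pi.smul_apply, smul_eq_mul]
  congr 2
  push_cast
  field_simp

theorem fourier_gaussian_pi_ne_zero {b : ℂ} (hb : 0 < b.re) (ξ : ℝ) :
    𝓕 (fun x : ℝ => Complex.exp (-π * b * x ^ 2)) ξ ≠ 0 := by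
  rw [fourier_gaussian_pi hb]
  refine mul_ne_zero (one_div_ne_zero fun h => ?_) (Complex.exp_ne_zero _)
  exact Complex.ne_zero_of_re_pos hb ((Complex.cpow_eq_zero_iff _ _).1 h).1

theorem integrable_heatKernel {τ : ℝ} (hτ : 0 < τ) : Integrable (heatKernel τ) := by
  have hb : 0 < ((π : ℂ) * ((1 / (4 * π * τ) : ℝ) : ℂ)).re := by
    rw [← Complex.ofReal_mul, Complex.ofReal_re]; positivity
  rw [heatKernel_eq_smul_gaussian]
  simpa only [neg_mul] using (integrable_cexp_neg_mul_sq hb).smul _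

theorem fourier_heatKernel_ne_zero {τ : ℝ} (hτ : 0 < τ) (ξ : ℝ) : 𝓕 (heatKernel τ) ξ ≠ 0 := by
  have hb : 0 < (((1 / (4 * π * τ) : ℝ) : ℂ)).re := by rw [Complex.ofReal_re]; positivity
  have hc : (1 / (2 * Real.sqrt (π * τ)) : ℂ) ≠ 0 := by
    have : 0 < Real.sqrt (π * τ) := by positivity
    exact one_div_ne_zero (mul_ne_zero two_ne_zero (Complex.ofReal_ne_zero.2 this.ne'))
  rw [heatKernel_eq_smul_gaussian, Real.fourier_const_smul, Pi.smul_apply, smul_eq_mul]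
  exact mul_ne_zero hc (fourier_gaussian_pi_ne_zero hb ξ)

/-- Uniqueness for the retrospective heat problem on the line: if two integrable
initial distributions produce the same temperature field at time `τ > 0`, they
agree almost everywhere. -/
theorem retrospective_heat_uniqueness
    (τ : ℝ) (hτ : 0 < τ) (f₁ f₂ : ℝ → ℂ)
    (hf₁ : Integrable f₁) (hf₂ : Integrable f₂)
    (h : ∀ x : ℝ,
      (∫ ξ : ℝ, (1 / (2 * Real.sqrt (π * τ)) : ℂ) *
          Complex.exp (-(((x : ℂ) - ξ) ^ 2) / (4 * τ)) * f₁ ξ) =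
      ∫ ξ : ℝ, (1 / (2 * Real.sqrt (π * τ)) : ℂ) *
          Complex.exp (-(((x : ℂ) - ξ) ^ 2) / (4 * τ)) * f₂ ξ) :
    f₁ =ᵐ[volume] f₂ := by
  have hconv : f₁ ⋆[ContinuousLinearMap.mul ℂ ℂ] heatKernel τ =
      f₂ ⋆[ContinuousLinearMap.mul ℂ ℂ] heatKernel τ := by
    ext x
    simpa only [convolution_heatKernel_apply] using h x
  exact Real.ae_eq_of_convolution_eq (integrable_heatKernel hτ) (fourier_heatKernel_ne_zero hτ)
    hf₁ hf₂ hconv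
end

section
/- For all real numbers x and λ, the series Σ_{j=0}^{∞} He_j(x) · λ^j / j! converges to exp(λx − λ²/2), where He_j denotes the j-th probabilists' Hermite polynomial. (Corollary 1: with t = 1/2, n = 1 and φ(x,λ) = e^{iλx}, the generating function e^{−λ²/2} e^{λx} = Σ_{j≥0} H_{j1}(x) λ^j / j! holds, with H_{j1} the classical Hermite polynomials.) -/
open Real Polynomial

/-!
Write `exp (λx - λ²/2) = exp (-λ²/2) · exp (λx)` and take the Cauchy product of the two
exponential series. The coefficient of `λ^j` is `∑ₖ cₖ x^(j-k) / (j-k)!`, where `cₖ` are the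
Taylor coefficients of `exp (-t²/2)`; the explicit formula `coeff_hermite_explicit` identifies it
with `He_j(x) / j!`.
-/

open scoped Nat
open Finset

theorem Nat.factorial_two_mul_eq_doubleFactorial (n : ℕ) :
    (2 * n)! = (2 * n - 1)‼ * 2 ^ n * n ! := by
  cases n with
  | zero => rfl
  | succ n =>
    rw [show 2 * (n + 1) = 2 * n + 1 + 1 by ring, Nat.factorial_eq_mul_doubleFactorial,
      show 2 * n + 1 + 1 = 2 * (n + 1) by ring, Nat.doubleFactorial_two_mul,
      show 2 * (n + 1) - 1 = 2 * n + 1 by omega]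
    ring

theorem Real.hasSum_pow_div_factorial (x : ℝ) : HasSum (fun n ↦ x ^ n / n !) (exp x) :=
  Real.exp_eq_exp_ℝ ▸ NormedSpace.expSeries_div_hasSum_exp x

noncomputable def gaussianTaylorCoeff (k : ℕ) : ℝ :=
  if Even k then (-1 / 2) ^ (k / 2) / (k / 2)! else 0

theorem gaussianTaylorCoeff_two_mul (n : ℕ) :
    gaussianTaylorCoeff (2 * n) = (-1 / 2) ^ n / n ! := by
  simp [gaussianTaylorCoeff]

theorem gaussianTaylorCoeff_two_mul_add_one (n : ℕ) : gaussianTaylorCoeff (2 * n + 1) = 0 := by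
  simp [gaussianTaylorCoeff]

theorem hasSum_gaussianTaylorCoeff_mul_pow (t : ℝ) :
    HasSum (fun k ↦ gaussianTaylorCoeff k * t ^ k) (exp (-(t ^ 2 / 2))) := by
  rw [← add_zero (exp _)]
  refine HasSum.even_add_odd ?_ ?_
  · convert Real.hasSum_pow_div_factorial (-(t ^ 2 / 2)) using 2 with n
    rw [gaussianTaylorCoeff_two_mul, pow_mul]
    ring
  · simpa only [gaussianTaylorCoeff_two_mul_add_one, zero_mul] using hasSum_zero

theorem summable_norm_gaussianTaylorCoeff_mul_pow (t : ℝ) :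
    Summable fun k ↦ ‖gaussianTaylorCoeff k * t ^ k‖ := by
  refine Summable.even_add_odd ?_ ?_
  · convert Real.summable_pow_div_factorial (t ^ 2 / 2) using 2 with n
    rw [gaussianTaylorCoeff_two_mul, pow_mul, norm_mul, norm_div, norm_pow, norm_pow]
    simp [div_pow]
    ring
  · simpa only [gaussianTaylorCoeff_two_mul_add_one, zero_mul, norm_zero] using summable_zero

theorem coeff_hermite_add_mul_factorial (k m : ℕ) :
    ((coeff (hermite (k + m)) m : ℤ) : ℝ) * m ! = gaussianTaylorCoeff k * (k + m)! := by
  rcases Nat.even_or_odd' k with ⟨n, rfl | rfl⟩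
  · rw [coeff_hermite_explicit, gaussianTaylorCoeff_two_mul,
      ← Nat.add_choose_mul_factorial_mul_factorial, Nat.factorial_two_mul_eq_doubleFactorial,
      div_pow]
    push_cast
    field_simp
  · have hodd : Odd (2 * n + 1 + m + m) := by
      rw [add_assoc]
      exact (odd_two_mul_add_one n).add_even ⟨m, rfl⟩
    simp [coeff_hermite_of_odd_add hodd, gaussianTaylorCoeff_two_mul_add_one]

theorem aeval_hermite_mul_pow_div_factorial (x t : ℝ) (j : ℕ) :
    aeval x (hermite j) * t ^ j / j ! =
      ∑ k ∈ range (j + 1), gaussianTaylorCoeff k * t ^ k * ((t * x) ^ (j - k) / (j - k)!) := by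
  rw [aeval_eq_sum_range, natDegree_hermite, ← sum_range_reflect, sum_mul, sum_div]
  refine sum_congr rfl fun k hk ↦ ?_
  obtain ⟨m, rfl⟩ : ∃ m, j = k + m := ⟨j - k, by grind⟩
  rw [show k + m + 1 - 1 - k = m by omega, show k + m - k = m by omega, zsmul_eq_mul]
  have key := coeff_hermite_add_mul_factorial k m
  rw [mul_pow, pow_add]
  field_simp
  linear_combination t ^ k * t ^ m * x ^ m * key

/-- Generating function of the probabilists' Hermite polynomials:
`Σ_j He_j(x) λ^j / j! = exp(λx − λ²/2)`. -/
theorem hermite_generating_function (x lam : ℝ) :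
    HasSum (fun j : ℕ => (Polynomial.aeval x (Polynomial.hermite j)) * lam ^ j / (j.factorial : ℝ))
      (Real.exp (lam * x - lam ^ 2 / 2)) := by
  have h := hasSum_sum_range_mul_of_summable_norm (summable_norm_gaussianTaylorCoeff_mul_pow lam)
    (NormedSpace.norm_expSeries_div_summable (lam * x))
  rw [(hasSum_gaussianTaylorCoeff_mul_pow lam).tsum_eq,
    (Real.hasSum_pow_div_factorial (lam * x)).tsum_eq, ← Real.exp_add] at h
  rw [show lam * x - lam ^ 2 / 2 = -(lam ^ 2 / 2) + lam * x by ring]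
  simpa only [aeval_hermite_mul_pow_div_factorial] using h
end

section
/- Let α > 0 and τ > 0 be real numbers. For each j ∈ ℕ define the fractal Hermite polynomial H_j^{α,τ}(x) = Σ_{k=0}^{⌊j/2⌋} (−1)^k · τ^{αk} · j! / (Γ(αk+1) · (j−2k)!) · x^{j−2k}, where τ^{αk} is the real power and Γ is the Gamma function. Then for all real λ and x, the series Σ_{j=0}^{∞} H_j^{α,τ}(x) · λ^j / j! converges to E_{α,1}(−λ²τ^{α}) · exp(λx), where E_{α,1}(z) = Σ_{k=0}^{∞} z^k / Γ(αk+1). (Formula (13) in the homogeneous case n = 1, φ(x,−iλ) = e^{λx}: the generating function of the fractal Hermite polynomials is E_{α,1}(−λ²τ^α) φ(x,−iλ) = Σ_{j≥0} H_{jn}(x) λ^j/j!.) -/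
open Real Finset

/-- The fractal Hermite polynomial with parameters `α > 0`, `τ > 0`:
`H_j^{α,τ}(x) = Σ_{k=0}^{⌊j/2⌋} (−1)^k τ^{αk} j! / (Γ(αk+1)(j−2k)!) x^{j−2k}`. -/
noncomputable def fractalHermite (α τ : ℝ) (j : ℕ) (x : ℝ) : ℝ :=
  ∑ k ∈ Finset.range (j / 2 + 1),
    (-1 : ℝ) ^ k * τ ^ (α * k : ℝ) * (j.factorial : ℝ) /
      (Real.Gamma (α * k + 1) * ((j - 2 * k).factorial : ℝ)) * x ^ (j - 2 * k)

/-! The generating function is the Cauchy product of the Mittag-Leffler series in `λ²`,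
spread onto the even indices, with the exponential series of `λx`. The Mittag-Leffler series
converges absolutely because, once `α n ≥ 1`, `Γ(αk + 1)` dominates `⌊k/n⌋!`. -/

theorem factorial_div_le_Gamma_mul_add_one {α : ℝ} {n k : ℕ} (hn : 1 ≤ α * n) (hk : n ≤ k) :
    ((k / n).factorial : ℝ) ≤ Gamma (α * k + 1) := by
  have hn0 : 0 < n := Nat.pos_of_ne_zero fun h => by simp [h] at hn; linarith
  have hα : 0 ≤ α := by
    by_contra! h; nlinarith [(Nat.cast_nonneg n : (0 : ℝ) ≤ n)]
  have hq : (1 : ℝ) ≤ (k / n : ℕ) := by exact_mod_cast (Nat.one_le_div_iff hn0).mpr hk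
  have hqk : ((k / n : ℕ) : ℝ) ≤ α * k := by
    have : ((k / n : ℕ) : ℝ) * n ≤ k := by exact_mod_cast Nat.div_mul_le_self k n
    nlinarith
  rw [← Gamma_nat_eq_factorial]
  exact Gamma_strictMonoOn_Ici.monotoneOn (Set.mem_Ici.mpr (by linarith))
    (Set.mem_Ici.mpr (by linarith)) (by linarith)

theorem pow_le_pow_pow_div_add_one {a m : ℝ} (ha : 0 ≤ a) (ham : a ≤ m) (hm : 1 ≤ m)
    {n : ℕ} (hn : 0 < n) (k : ℕ) : a ^ k ≤ (m ^ n) ^ (k / n + 1) := by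
  rw [← pow_mul]
  calc a ^ k ≤ m ^ k := pow_le_pow_left₀ ha ham k
    _ ≤ m ^ (n * (k / n + 1)) := by
      refine pow_le_pow_right₀ hm ?_
      have := Nat.lt_div_mul_add (a := k) hn
      nlinarith

theorem Summable.comp_nat_div {f : ℕ → ℝ} (hf : Summable f) (hf₀ : 0 ≤ f) (n : ℕ) [NeZero n] :
    Summable fun k => f (k / n) := by
  have hprod : Summable fun p : ℕ × Fin n => f p.1 * 1 :=
    hf.mul_of_nonneg (Summable.of_finite (f := fun _ : Fin n => (1 : ℝ))) hf₀ fun _ => zero_le_one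
  simp only [mul_one] at hprod
  exact (Nat.divModEquiv n).summable_iff.mpr hprod

theorem summable_norm_pow_div_Gamma {α : ℝ} (hα : 0 < α) (z : ℝ) :
    Summable fun k : ℕ => ‖z ^ k / Gamma (α * k + 1)‖ := by
  obtain ⟨n, hn⟩ : ∃ n : ℕ, 1 ≤ α * n := by
    obtain ⟨n, hn⟩ := exists_nat_ge α⁻¹
    exact ⟨n, by rwa [inv_le_iff_one_le_mul₀' hα] at hn⟩
  have hn0 : NeZero n := ⟨fun h => by simp [h] at hn; linarith⟩
  set M := max |z| 1 ^ n
  have hM : Summable fun k => M * (M ^ (k / n) / (k / n).factorial) :=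
    ((Real.summable_pow_div_factorial M).comp_nat_div (fun _ => by positivity) n).mul_left M
  rw [← summable_nat_add_iff n] at hM ⊢
  refine hM.of_nonneg_of_le (fun _ => norm_nonneg _) fun k => ?_
  have hfac := factorial_div_le_Gamma_mul_add_one hn (Nat.le_add_left n k)
  calc ‖z ^ (k + n) / Gamma (α * ↑(k + n) + 1)‖
      = |z| ^ (k + n) / Gamma (α * ↑(k + n) + 1) := by
        rw [norm_div, norm_pow, norm_eq_abs, norm_of_nonneg (by positivity)]
    _ ≤ M ^ ((k + n) / n + 1) / ((k + n) / n).factorial := by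
        gcongr
        exact pow_le_pow_pow_div_add_one (abs_nonneg z) (le_max_left _ _) (le_max_right _ _)
          (NeZero.pos n) _
    _ = M * (M ^ ((k + n) / n) / ((k + n) / n).factorial) := by ring

theorem summable_norm_extend_zero {β γ E : Type*} [SeminormedAddCommGroup E] {g : β → γ}
    (hg : Function.Injective g) {f : β → E} :
    Summable (fun y => ‖Function.extend g f 0 y‖) ↔ Summable fun x => ‖f x‖ := by
  have hnorm : (fun y => ‖Function.extend g f 0 y‖) = Function.extend g (‖f ·‖) 0 := by
    ext y
    rw [Function.apply_extend (‖·‖)]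
    congr 1
    ext
    exact norm_zero
  rw [hnorm, summable_extend_zero hg]

theorem sum_range_succ_extend_two_mul_mul {R : Type*} [CommSemiring R] (a g : ℕ → R) (j : ℕ) :
    ∑ p ∈ range (j + 1), Function.extend (2 * ·) a 0 p * g (j - p) =
      ∑ k ∈ range (j / 2 + 1), a k * g (j - 2 * k) := by
  have hinj : Function.Injective (2 * · : ℕ → ℕ) := mul_right_injective₀ two_ne_zero
  symm
  calc ∑ k ∈ range (j / 2 + 1), a k * g (j - 2 * k)
      = ∑ p ∈ (range (j / 2 + 1)).image (2 * ·), Function.extend (2 * ·) a 0 p * g (j - p) := by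
        rw [sum_image fun _ _ _ _ h => hinj h]
        simp only [hinj.extend_apply]
    _ = ∑ p ∈ range (j + 1), Function.extend (2 * ·) a 0 p * g (j - p) := by
        refine sum_subset (fun p => by simp only [mem_image, mem_range]; omega) fun p _ hp => ?_
        rw [Function.extend_apply', Pi.zero_apply, zero_mul]
        rintro ⟨k, rfl⟩
        exact hp (mem_image_of_mem _ (by simp only [mem_range] at *; omega))

theorem fractalHermite_mul_pow_div_factorial {τ : ℝ} (hτ : 0 ≤ τ) (α lam x : ℝ) (j : ℕ) :
    fractalHermite α τ j x * lam ^ j / j.factorial =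
      ∑ k ∈ range (j / 2 + 1), (-lam ^ 2 * τ ^ α) ^ k / Gamma (α * k + 1) *
        ((lam * x) ^ (j - 2 * k) / (j - 2 * k).factorial) := by
  rw [fractalHermite, sum_mul, sum_div]
  refine sum_congr rfl fun k hk => ?_
  have hlam : lam ^ j = lam ^ (2 * k) * lam ^ (j - 2 * k) := by
    rw [← pow_add]; congr 1; simp only [mem_range] at hk; omega
  have hτk : τ ^ (α * k) = (τ ^ α) ^ k := by rw [rpow_mul hτ, rpow_natCast]
  have hj : (j.factorial : ℝ) ≠ 0 := by positivity
  rw [hlam, hτk]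
  field_simp
  ring

/-- Generating function of the fractal Hermite polynomials (formula (13), case
`n = 1`): `Σ_j H_j^{α,τ}(x) λ^j / j! = E_{α,1}(−λ²τ^α) e^{λx}`. -/
theorem fractalHermite_generating_function (α τ : ℝ) (hα : 0 < α) (hτ : 0 < τ)
    (lam x : ℝ) :
    HasSum (fun j : ℕ => fractalHermite α τ j x * lam ^ j / (j.factorial : ℝ))
      ((∑' k : ℕ, (-lam ^ 2 * τ ^ (α : ℝ)) ^ k / Real.Gamma (α * k + 1)) *
        Real.exp (lam * x)) := by
  set a : ℕ → ℝ := fun k => (-lam ^ 2 * τ ^ α) ^ k / Gamma (α * k + 1)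
  have hinj : Function.Injective (2 * · : ℕ → ℕ) := mul_right_injective₀ two_ne_zero
  have ha : Summable fun p => ‖Function.extend (2 * ·) a 0 p‖ :=
    (summable_norm_extend_zero hinj).mpr (summable_norm_pow_div_Gamma hα _)
  have hcauchy := hasSum_sum_range_mul_of_summable_norm ha
    (NormedSpace.norm_expSeries_div_summable (lam * x))
  rw [tsum_extend_zero hinj, (NormedSpace.expSeries_div_hasSum_exp (lam * x)).tsum_eq,
    ← Real.exp_eq_exp_ℝ] at hcauchy
  refine hcauchy.congr_fun fun j => ?_
  rw [fractalHermite_mul_pow_div_factorial hτ.le]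
  exact (sum_range_succ_extend_two_mul_mul a (fun q => (lam * x) ^ q / q.factorial) j).symm
end
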